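/- Let n ≥ 1, let P be a real 2n×2n matrix that is both symplectic (PᵀJP = J) and orthogonal (PᵀP = I_{2n}), and let ε ∈ ℝ. Then J M_ε(P) J = M_ε(P); equivalently, M_ε(P) anticommutes with J: M_ε(P) J = −J M_ε(P). -/
import Mathlib


open Matrix

/-- The standard symplectic matrix `J = [[0, -Iₙ], [Iₙ, 0]]` in `n × n` block form. -/
def Jmat (n : ℕ) : Matrix (Fin n ⊕ Fin n) (Fin n ⊕ Fin n) ℝ :=
  Matrix.fromBlocks 0 (-1) 1 0

/-- `S⁻(ε) = [[sin(2ε) Iₙ, −cos(2ε) Iₙ], [−cos(2ε) Iₙ, −sin(2ε) Iₙ]]`. -/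
noncomputable def Sminus (n : ℕ) (ε : ℝ) : Matrix (Fin n ⊕ Fin n) (Fin n ⊕ Fin n) ℝ :=
  Matrix.fromBlocks (Real.sin (2 * ε) • 1) (-(Real.cos (2 * ε) • 1))
    (-(Real.cos (2 * ε) • 1)) (-(Real.sin (2 * ε) • 1))

/-- `S⁺(ε) = [[sin(2ε) Iₙ, cos(2ε) Iₙ], [cos(2ε) Iₙ, −sin(2ε) Iₙ]]`. -/
noncomputable def Splus (n : ℕ) (ε : ℝ) : Matrix (Fin n ⊕ Fin n) (Fin n ⊕ Fin n) ℝ :=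
  Matrix.fromBlocks (Real.sin (2 * ε) • 1) (Real.cos (2 * ε) • 1)
    (Real.cos (2 * ε) • 1) (-(Real.sin (2 * ε) • 1))

/-- `M_ε(P) = Pᵀ S⁻(ε) P + S⁺(ε)`. -/
noncomputable def Meps (n : ℕ) (ε : ℝ)
    (P : Matrix (Fin n ⊕ Fin n) (Fin n ⊕ Fin n) ℝ) :
    Matrix (Fin n ⊕ Fin n) (Fin n ⊕ Fin n) ℝ :=
  Pᵀ * Sminus n ε * P + Splus n ε

theorem stmt_13 (n : ℕ) (hn : 1 ≤ n)
    (P : Matrix (Fin n ⊕ Fin n) (Fin n ⊕ Fin n) ℝ)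
    (hsp : Pᵀ * Jmat n * P = Jmat n)
    (horth : Pᵀ * P = 1) (ε : ℝ) :
    Jmat n * Meps n ε P * Jmat n = Meps n ε P ∧
      Meps n ε P * Jmat n = -(Jmat n * Meps n ε P) := by
  have hJJ : Jmat n * Jmat n = -1 := by
    rw [Jmat, Matrix.fromBlocks_multiply, ← Matrix.fromBlocks_one, Matrix.fromBlocks_neg]
    congr 1 <;> simp
  have hPPt : P * Pᵀ = 1 := mul_eq_one_comm.mp horth
  have hPJ : P * Jmat n = Jmat n * P := by
    have h := congrArg (fun X => P * X) hsp
    simp only [← Matrix.mul_assoc] at h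
    rw [hPPt, Matrix.one_mul] at h
    exact h.symm
  have hJPt : Jmat n * Pᵀ = Pᵀ * Jmat n := by
    have h1 := congrArg Matrix.transpose hPJ
    have hJt : (Jmat n)ᵀ = -(Jmat n) := by
      rw [Jmat, Matrix.fromBlocks_transpose, Matrix.fromBlocks_neg]
      congr 1 <;> simp [Matrix.transpose_one]
    simp only [Matrix.transpose_mul, hJt, Matrix.neg_mul, Matrix.mul_neg] at h1
    exact neg_inj.mp h1
  have hSm : Jmat n * Sminus n ε * Jmat n = Sminus n ε := by
    rw [Jmat, Sminus, Matrix.fromBlocks_multiply, Matrix.fromBlocks_multiply]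
    congr 1 <;> simp [Matrix.smul_mul, Matrix.mul_smul] <;> abel
  have hSp : Jmat n * Splus n ε * Jmat n = Splus n ε := by
    rw [Jmat, Splus, Matrix.fromBlocks_multiply, Matrix.fromBlocks_multiply]
    congr 1 <;> simp [Matrix.smul_mul, Matrix.mul_smul] <;> abel
  have h1 : Jmat n * Meps n ε P * Jmat n = Meps n ε P := by
    unfold Meps
    rw [Matrix.mul_add, Matrix.add_mul, hSp]
    congr 1
    simp only [← Matrix.mul_assoc]
    rw [hJPt]
    rw [Matrix.mul_assoc (Pᵀ * Jmat n * Sminus n ε) P (Jmat n), hPJ]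
    simp only [← Matrix.mul_assoc]
    rw [Matrix.mul_assoc Pᵀ (Jmat n) (Sminus n ε),
        Matrix.mul_assoc Pᵀ (Jmat n * Sminus n ε) (Jmat n), hSm]
  refine ⟨h1, ?_⟩
  have h2 := congrArg (fun X => Jmat n * X) h1
  simp only [← Matrix.mul_assoc, hJJ, Matrix.neg_mul, Matrix.one_mul] at h2
  exact neg_eq_iff_eq_neg.mp h2
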